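/- Let A be a ⊖-algebra with negation ¬a := 1 ⊖ a, and define a ⊕ b := ¬(¬a ⊖ b). Then the following are equivalent: (1) the structure (A, ⊕, ¬, 0) satisfies the MV-algebra axioms, i.e. ⊕ is commutative and associative with neutral element 0, ¬¬a = a for all a, a ⊕ 1 = 1 for all a, and ¬(¬a ⊕ b) ⊕ b = ¬(¬b ⊕ a) ⊕ a for all a, b; (2) for all a, b, c ∈ A: (i) (a ⊖ b) ⊖ c = a ⊖ ¬(¬b ⊖ c), (ii) ¬a ⊖ b = ¬b ⊖ a, and (iii) a ∧ b = a ⊖ (a ⊖ b). -/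
import Mathlib


class OminusAlgebra (A : Type*) extends DistribLattice A, BoundedOrder A where
  ominus : A → A → A
  inf_ominus : ∀ a b c : A, ominus (a ⊓ b) c = ominus a c ⊓ ominus b c
  sup_ominus : ∀ a b c : A, ominus (a ⊔ b) c = ominus a c ⊔ ominus b c
  ominus_inf : ∀ a b c : A, ominus a (b ⊓ c) = ominus a b ⊔ ominus a c
  ominus_sup : ∀ a b c : A, ominus a (b ⊔ c) = ominus a b ⊓ ominus a c
  bot_ominus : ∀ a : A, ominus ⊥ a = ⊥
  ominus_top : ∀ a : A, ominus a ⊤ = ⊥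
  ominus_bot : ∀ a : A, ominus a ⊥ = a

infixl:65 " ⊖ " => OminusAlgebra.ominus

variable {A : Type*} [OminusAlgebra A]

def oneg (a : A) : A := ⊤ ⊖ a

def oplus (a b : A) : A := oneg (oneg a ⊖ b)

def IsPrimeIdeal (x : Set A) : Prop :=
  x.Nonempty ∧ (∀ a b : A, a ≤ b → b ∈ x → a ∈ x) ∧
    (∀ a b : A, a ∈ x → b ∈ x → a ⊔ b ∈ x) ∧ x ≠ Set.univ ∧
    (∀ a b : A, a ⊓ b ∈ x → a ∈ x ∨ b ∈ x)

def ineg (x : Set A) : Set A := {a | oneg a ∉ x}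

def domPlus (x y : Set A) : Prop := y ⊆ ineg x

def pplus (x y : Set A) : Set A := {a | ∃ b ∈ y, a ⊖ b ∈ x}

def domStar (x y : Set A) : Prop := ¬ ineg x ⊆ y

def pstar (x y : Set A) : Set A := {a | ∀ b ∉ y, a ⊖ b ∈ x}

section AuxLemmas

open OminusAlgebra

lemma aux_om_le_left (a b : A) : a ⊖ b ≤ a := by
  have h := OminusAlgebra.ominus_sup a ⊥ b
  rw [bot_sup_eq, OminusAlgebra.ominus_bot] at h
  rw [h]; exact inf_le_left

lemma aux_om_mono_left {a b : A} (c : A) (h : a ≤ b) : a ⊖ c ≤ b ⊖ c := by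
  have h2 := OminusAlgebra.sup_ominus a b c
  rw [sup_eq_right.mpr h] at h2
  rw [h2]; exact le_sup_left

lemma aux_om_anti_right (a : A) {b c : A} (h : b ≤ c) : a ⊖ c ≤ a ⊖ b := by
  have h2 := OminusAlgebra.ominus_sup a b c
  rw [sup_eq_right.mpr h] at h2
  rw [h2]; exact inf_le_left

lemma aux_oneg_bot : oneg (⊥ : A) = ⊤ := OminusAlgebra.ominus_bot ⊤

lemma aux_oneg_top : oneg (⊤ : A) = ⊥ := OminusAlgebra.ominus_top ⊤

lemma aux_oneg_sup (x y : A) : oneg (x ⊔ y) = oneg x ⊓ oneg y :=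
  OminusAlgebra.ominus_sup ⊤ x y

lemma aux_oneg_inf (x y : A) : oneg (x ⊓ y) = oneg x ⊔ oneg y :=
  OminusAlgebra.ominus_inf ⊤ x y

lemma aux_oneg_anti {x y : A} (h : x ≤ y) : oneg y ≤ oneg x :=
  aux_om_anti_right ⊤ h

/-- Forward direction: the MV axioms imply the three identities. -/
lemma aux_forward
    (comm : ∀ a b : A, oplus a b = oplus b a)
    (assoc : ∀ a b c : A, oplus (oplus a b) c = oplus a (oplus b c))
    (dneg : ∀ a : A, oneg (oneg a) = a)
    (luk : ∀ a b : A, oplus (oneg (oplus (oneg a) b)) b = oplus (oneg (oplus (oneg b) a)) a) :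
    ∀ a b c : A,
      (a ⊖ b) ⊖ c = a ⊖ oneg (oneg b ⊖ c) ∧
      oneg a ⊖ b = oneg b ⊖ a ∧
      a ⊓ b = a ⊖ (a ⊖ b) := by
  have negInj : ∀ {x y : A}, oneg x = oneg y → x = y := by
    intro x y h
    rw [← dneg x, h, dneg]
  have ii : ∀ a b : A, oneg a ⊖ b = oneg b ⊖ a := by
    intro a b
    have h := comm a b
    simp only [oplus] at h
    exact negInj h
  have i : ∀ a b c : A, (a ⊖ b) ⊖ c = a ⊖ oneg (oneg b ⊖ c) := by
    intro a b c
    have h := assoc (oneg a) b c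
    simp only [oplus, dneg] at h
    exact negInj h
  have zero_oplus : ∀ x : A, oplus ⊥ x = x := by
    intro x
    show oneg (oneg ⊥ ⊖ x) = x
    rw [aux_oneg_bot]
    exact dneg x
  have oself : ∀ b : A, b ⊖ b = ⊥ := by
    intro b
    have h := luk ⊤ b
    simp only [oplus, dneg, aux_oneg_top, aux_oneg_bot, OminusAlgebra.bot_ominus,
      OminusAlgebra.ominus_top, OminusAlgebra.ominus_bot] at h
    -- h : oneg (oneg (⊤ ⊖ b) ⊖ b) = ⊤
    have e : (⊤ : A) ⊖ b = oneg b := rfl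
    rw [e, dneg] at h
    have h2 : oneg (b ⊖ b) = oneg ⊥ := by rw [aux_oneg_bot]; exact h
    exact negInj h2
  have le_imp : ∀ {a b : A}, a ≤ b → a ⊖ b = ⊥ := by
    intro a b h
    have := (aux_om_mono_left b h).trans_eq (oself b)
    exact le_bot_iff.mp this
  have luk' : ∀ a b : A, oplus (a ⊖ b) b = oplus (b ⊖ a) a := by
    intro a b
    have h := luk a b
    simp only [oplus, dneg] at h
    simp only [oplus]
    exact h
  have imp_le : ∀ {a b : A}, a ⊖ b = ⊥ → a ≤ b := by
    intro a b h
    have h1 : (a ⊔ b) ⊖ b = ⊥ := by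
      rw [OminusAlgebra.sup_ominus, h, oself, bot_sup_eq]
    have h2 : b ⊖ (a ⊔ b) = ⊥ := le_imp le_sup_right
    have h3 := luk' (a ⊔ b) b
    rw [h1, h2, zero_oplus, zero_oplus] at h3
    -- h3 : b = a ⊔ b
    exact le_sup_left.trans h3.ge
  have x_le_oplus : ∀ x z : A, x ≤ oplus z x := by
    intro x z
    apply imp_le
    have e : x ⊖ oplus z x = (x ⊖ z) ⊖ x := (i x z x).symm
    rw [e]
    exact le_bot_iff.mp ((aux_om_mono_left x (aux_om_le_left x z)).trans_eq (oself x))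
  have oplus_mono : ∀ {x x' : A} (y : A), x ≤ x' → oplus x y ≤ oplus x' y := by
    intro x x' y h
    exact aux_oneg_anti (aux_om_mono_left y (aux_oneg_anti h))
  have sup_eq : ∀ a b : A, oplus (a ⊖ b) b = a ⊔ b := by
    intro a b
    apply le_antisymm
    · calc oplus (a ⊖ b) b ≤ oplus ((a ⊔ b) ⊖ b) b :=
            oplus_mono b (aux_om_mono_left b le_sup_left)
        _ = oplus (b ⊖ (a ⊔ b)) (a ⊔ b) := luk' _ _
        _ = oplus ⊥ (a ⊔ b) := by rw [le_imp le_sup_right]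
        _ = a ⊔ b := zero_oplus _
    · apply sup_le
      · have h := x_le_oplus a (b ⊖ a)
        rw [← luk' a b] at h
        exact h
      · exact x_le_oplus b (a ⊖ b)
  intro a b c
  refine ⟨i a b c, ii a b, ?_⟩
  have h1 : oneg b ⊖ oneg a = a ⊖ b := by
    rw [ii b (oneg a), dneg]
  have key : oneg b ⊔ oneg a = oneg (a ⊖ (a ⊖ b)) := by
    rw [← sup_eq (oneg b) (oneg a), h1]
    show oneg (oneg (a ⊖ b) ⊖ oneg a) = _
    rw [ii (a ⊖ b) (oneg a), dneg]
  calc a ⊓ b = b ⊓ a := inf_comm a b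
    _ = oneg (oneg b) ⊓ oneg (oneg a) := by rw [dneg, dneg]
    _ = oneg (oneg b ⊔ oneg a) := (aux_oneg_sup _ _).symm
    _ = oneg (oneg (a ⊖ (a ⊖ b))) := by rw [key]
    _ = a ⊖ (a ⊖ b) := dneg _

/-- Backward direction: the three identities imply the MV axioms. -/
lemma aux_backward
    (H : ∀ a b c : A,
      (a ⊖ b) ⊖ c = a ⊖ oneg (oneg b ⊖ c) ∧
      oneg a ⊖ b = oneg b ⊖ a ∧
      a ⊓ b = a ⊖ (a ⊖ b)) :
    (∀ a b : A, oplus a b = oplus b a) ∧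
     (∀ a b c : A, oplus (oplus a b) c = oplus a (oplus b c)) ∧
     (∀ a : A, oplus a ⊥ = a) ∧
     (∀ a : A, oplus ⊥ a = a) ∧
     (∀ a : A, oneg (oneg a) = a) ∧
     (∀ a : A, oplus a (oneg ⊥) = oneg ⊥) ∧
     (∀ a b : A, oplus (oneg (oplus (oneg a) b)) b = oplus (oneg (oplus (oneg b) a)) a) := by
  have i : ∀ a b c : A, (a ⊖ b) ⊖ c = a ⊖ oneg (oneg b ⊖ c) := fun a b c => (H a b c).1
  have ii : ∀ a b : A, oneg a ⊖ b = oneg b ⊖ a := fun a b => (H a b b).2.1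
  have iii : ∀ a b : A, a ⊓ b = a ⊖ (a ⊖ b) := fun a b => (H a b b).2.2
  have dneg : ∀ a : A, oneg (oneg a) = a := by
    intro a
    have h := iii ⊤ a
    rw [top_inf_eq] at h
    exact h.symm
  have key : ∀ a b : A, oplus (oneg (oplus (oneg a) b)) b = a ⊔ b := by
    intro a b
    show oneg (oneg (oneg (oneg (oneg (oneg a) ⊖ b))) ⊖ b) = a ⊔ b
    rw [dneg (oneg (oneg (oneg a) ⊖ b)), dneg a]
    -- goal : oneg (oneg (a ⊖ b) ⊖ b) = a ⊔ b
    rw [ii (a ⊖ b) b]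
    have h1 : oneg b ⊖ oneg a = a ⊖ b := by rw [ii b (oneg a), dneg]
    rw [← h1, ← iii (oneg b) (oneg a), aux_oneg_inf, dneg, dneg, sup_comm]
  refine ⟨?_, ?_, ?_, ?_, dneg, ?_, ?_⟩
  · intro a b
    show oneg (oneg a ⊖ b) = oneg (oneg b ⊖ a)
    rw [ii a b]
  · intro a b c
    show oneg (oneg (oneg (oneg a ⊖ b)) ⊖ c) = oneg (oneg a ⊖ oneg (oneg b ⊖ c))
    rw [dneg (oneg a ⊖ b), i (oneg a) b c]
  · intro a
    show oneg (oneg a ⊖ ⊥) = a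
    rw [OminusAlgebra.ominus_bot]
    exact dneg a
  · intro a
    show oneg (oneg ⊥ ⊖ a) = a
    rw [aux_oneg_bot]
    exact dneg a
  · intro a
    rw [aux_oneg_bot]
    show oneg (oneg a ⊖ ⊤) = ⊤
    rw [OminusAlgebra.ominus_top]
    exact aux_oneg_bot
  · intro a b
    rw [key a b, key b a, sup_comm]

end AuxLemmas

theorem stmt0 {A : Type*} [OminusAlgebra A] :
    ((∀ a b : A, oplus a b = oplus b a) ∧
     (∀ a b c : A, oplus (oplus a b) c = oplus a (oplus b c)) ∧
     (∀ a : A, oplus a ⊥ = a) ∧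
     (∀ a : A, oplus ⊥ a = a) ∧
     (∀ a : A, oneg (oneg a) = a) ∧
     (∀ a : A, oplus a (oneg ⊥) = oneg ⊥) ∧
     (∀ a b : A, oplus (oneg (oplus (oneg a) b)) b = oplus (oneg (oplus (oneg b) a)) a)) ↔
    (∀ a b c : A,
      (a ⊖ b) ⊖ c = a ⊖ oneg (oneg b ⊖ c) ∧
      oneg a ⊖ b = oneg b ⊖ a ∧
      a ⊓ b = a ⊖ (a ⊖ b)) := by
  constructor
  · rintro ⟨comm, assoc, -, -, dneg, -, luk⟩
    exact aux_forward comm assoc dneg luk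
  · exact aux_backward
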